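/- Let A be a perfect k-algebra that is finitely generated as a k-algebra, and let S be a commutative associative unital k-algebra. Then the map ψ : C(A)⊗S → C(A⊗S), determined by ψ(γ⊗s) = γ⊗L_s, is an isomorphism of associative algebras. -/

import Mathlib

open TensorProduct

set_option synthInstance.maxHeartbeats 1000000
set_option maxHeartbeats 2000000

noncomputable section

/-- The set of derivations of a (possibly non-associative, non-unital) `k`-algebra `B`,
as a submodule of `Module.End k B`. -/
def Derivations (k B : Type) [Field k] [NonUnitalNonAssocSemiring B] [Module k B]
    [SMulCommClass k B B] [IsScalarTower k B B] :
    Submodule k (Module.End k B) where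
  carrier := {d | ∀ x y : B, d (x * y) = d x * y + x * d y}
  add_mem' := by
    intro f g hf hg x y
    simp only [LinearMap.add_apply, hf x y, hg x y, add_mul, mul_add]
    abel
  zero_mem' := by intro x y; simp
  smul_mem' := by
    intro c f hf x y
    simp only [LinearMap.smul_apply, hf x y, smul_add, smul_mul_assoc, mul_smul_comm]

/-- The centroid of a (possibly non-associative, non-unital) `k`-algebra `B`, as a
subalgebra of `Module.End k B`. -/
def centroid (k B : Type) [Field k] [NonUnitalNonAssocSemiring B] [Module k B]
    [SMulCommClass k B B] [IsScalarTower k B B] :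
    Subalgebra k (Module.End k B) where
  carrier := {γ | ∀ x y : B, γ (x * y) = γ x * y ∧ γ (x * y) = x * γ y}
  mul_mem' := by
    intro γ δ hγ hδ x y
    constructor
    · show γ (δ (x * y)) = γ (δ x) * y
      rw [(hδ x y).1, (hγ (δ x) y).1]
    · show γ (δ (x * y)) = x * γ (δ y)
      rw [(hδ x y).2, (hγ x (δ y)).2]
  one_mem' := by intro x y; exact ⟨rfl, rfl⟩
  add_mem' := by
    intro γ δ hγ hδ x y
    constructor
    · simp [LinearMap.add_apply, (hγ x y).1, (hδ x y).1, add_mul]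
    · simp [LinearMap.add_apply, (hγ x y).2, (hδ x y).2, mul_add]
  zero_mem' := by intro x y; simp
  algebraMap_mem' := by
    intro c x y
    constructor
    · simp [Module.algebraMap_end_apply, smul_mul_assoc]
    · simp [Module.algebraMap_end_apply, mul_smul_comm]

/-- A `k`-algebra is perfect if it is spanned by products. -/
def IsPerfectAlg (k B : Type) [Field k] [NonUnitalNonAssocSemiring B] [Module k B] : Prop :=
  Submodule.span k {z : B | ∃ x y : B, x * y = z} = ⊤

/-- The natural map `ψ : C(A) ⊗ S → End(A ⊗ S)`, `γ ⊗ s ↦ γ ⊗ L_s`. -/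
def psi (k A S : Type) [Field k] [NonUnitalNonAssocRing A] [Module k A]
    [SMulCommClass k A A] [IsScalarTower k A A] [CommRing S] [Algebra k S] :
    (↥(centroid k A) ⊗[k] S) →ₗ[k] Module.End k (A ⊗[k] S) :=
  (TensorProduct.homTensorHomMap (RingHom.id k) A S A S).comp
    (TensorProduct.map (centroid k A).val.toLinearMap (LinearMap.mul k S))
/-- `B` is finitely generated as a module over a set `Γ` of `k`-linear endomorphisms
(e.g. over its centroid or differential centroid). -/
def FGOverSet (k B : Type) [Field k] [AddCommMonoid B] [Module k B]
    (Γ : Set (Module.End k B)) : Prop :=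
  ∃ (n : ℕ) (a : Fin n → B), ∀ x : B, ∃ γ : Fin n → Module.End k B,
    (∀ i, γ i ∈ Γ) ∧ x = ∑ i, γ i (a i)

/-! Fix a basis `(b j)` of `S`, so that every element of `M ⊗ S` is uniquely `∑ⱼ mⱼ ⊗ b j`.
The coefficients of `ψ x (a ⊗ 1)` are the coefficients of `x`, applied to `a`; this gives
injectivity. Conversely, for `T` in the centroid of `A ⊗ S` the coefficient maps
`Tⱼ : a ↦ (T (a ⊗ 1))ⱼ` lie in `C(A)`. A centroid element vanishing on a generating set vanishes,
so only the finitely many `j` occurring in the `T (a ⊗ 1)` for generators `a` have `Tⱼ ≠ 0`, and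
`c = ∑ⱼ Tⱼ ⊗ b j` makes sense. Then `ψ c` and `T` agree on `A ⊗ 1`, hence everywhere: both are
in the centroid, `T (x y ⊗ s) = T (x ⊗ 1) * (y ⊗ s)`, and `A` is spanned by products. -/

section

variable {k : Type} [Field k]

section Centroid

variable {B C : Type} [NonUnitalNonAssocSemiring B] [Module k B] [SMulCommClass k B B]
  [IsScalarTower k B B] [NonUnitalNonAssocSemiring C] [Module k C] [SMulCommClass k C C]
  [IsScalarTower k C C]

theorem lmul_mem_centroid {S : Type} [CommSemiring S] [Algebra k S] (s : S) :
    Algebra.lmul k S s ∈ centroid k S :=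
  fun x y => ⟨(mul_assoc s x y).symm, mul_left_comm s x y⟩

theorem map_mem_centroid {γ : Module.End k B} {δ : Module.End k C} (hγ : γ ∈ centroid k B)
    (hδ : δ ∈ centroid k C) : TensorProduct.map γ δ ∈ centroid k (B ⊗[k] C) := by
  intro z w
  induction z using TensorProduct.induction_on with
  | zero => simp
  | add z₁ z₂ h₁ h₂ =>
    simp only [add_mul, map_add]
    exact ⟨by rw [h₁.1, h₂.1], by rw [h₁.2, h₂.2]⟩
  | tmul b c =>
    induction w using TensorProduct.induction_on with
    | zero => simp
    | add w₁ w₂ h₁ h₂ =>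
      simp only [mul_add, map_add]
      exact ⟨by rw [h₁.1, h₂.1], by rw [h₁.2, h₂.2]⟩
    | tmul b' c' =>
      simp only [Algebra.TensorProduct.tmul_mul_tmul, TensorProduct.map_tmul]
      exact ⟨by rw [(hγ b b').1, (hδ c c').1], by rw [(hγ b b').2, (hδ c c').2]⟩

theorem eq_zero_of_mem_centroid_of_adjoin_eq_top {γ : Module.End k B} (hγ : γ ∈ centroid k B)
    {s : Set B} (hs : NonUnitalAlgebra.adjoin k s = ⊤) (h : ∀ a ∈ s, γ a = 0) : γ = 0 := by
  suffices ∀ x ∈ NonUnitalAlgebra.adjoin k s, γ x = 0 from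
    LinearMap.ext fun x => this x (hs ▸ NonUnitalAlgebra.mem_top)
  intro x hx
  induction hx using NonUnitalAlgebra.adjoin_induction with
  | mem a ha => exact h a ha
  | add x y _ _ hx hy => rw [map_add, hx, hy, add_zero]
  | zero => exact map_zero γ
  | mul x y _ _ hx _ => rw [(hγ x y).1, hx, zero_mul]
  | smul r x _ hx => rw [map_smul, hx, smul_zero]

end Centroid

section Coefficients

variable {M R ι : Type} [AddCommMonoid M] [Module k M] [Semiring R] [Algebra k R] [DecidableEq ι]
  (b : Module.Basis ι k R)

def coeffEnd (T : Module.End k (M ⊗[k] R)) (j : ι) : Module.End k M :=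
  Finsupp.lapply j ∘ₗ (equivFinsuppOfBasisRight b).toLinearMap ∘ₗ T ∘ₗ
    (TensorProduct.mk k M R).flip 1

theorem coeffEnd_apply (T : Module.End k (M ⊗[k] R)) (j : ι) (a : M) :
    coeffEnd b T j a = equivFinsuppOfBasisRight b (T (a ⊗ₜ 1)) j := rfl

end Coefficients

section AlgebraCoefficients

variable {A R ι : Type} [NonUnitalNonAssocSemiring A] [Module k A] [SMulCommClass k A A]
  [IsScalarTower k A A] [Semiring R] [Algebra k R] [DecidableEq ι] (b : Module.Basis ι k R)

theorem equivFinsuppOfBasisRight_mul_tmul_one (z : A ⊗[k] R) (y : A) (j : ι) :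
    equivFinsuppOfBasisRight b (z * (y ⊗ₜ 1)) j = equivFinsuppOfBasisRight b z j * y := by
  induction z using TensorProduct.induction_on with
  | zero => simp
  | add z w hz hw => rw [add_mul, map_add, Finsupp.add_apply, hz, hw, map_add,
      Finsupp.add_apply, add_mul]
  | tmul a r => simp only [Algebra.TensorProduct.tmul_mul_tmul, mul_one,
      equivFinsuppOfBasisRight_apply_tmul_apply, smul_mul_assoc]

theorem equivFinsuppOfBasisRight_tmul_one_mul (z : A ⊗[k] R) (y : A) (j : ι) :
    equivFinsuppOfBasisRight b ((y ⊗ₜ 1) * z) j = y * equivFinsuppOfBasisRight b z j := by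
  induction z using TensorProduct.induction_on with
  | zero => simp
  | add z w hz hw => rw [mul_add, map_add, Finsupp.add_apply, hz, hw, map_add,
      Finsupp.add_apply, mul_add]
  | tmul a r => simp only [Algebra.TensorProduct.tmul_mul_tmul, one_mul,
      equivFinsuppOfBasisRight_apply_tmul_apply, mul_smul_comm]

theorem coeffEnd_mem_centroid {T : Module.End k (A ⊗[k] R)} (hT : T ∈ centroid k (A ⊗[k] R))
    (j : ι) : coeffEnd b T j ∈ centroid k A := by
  intro x y
  have hxy : (x * y) ⊗ₜ[k] (1 : R) = (x ⊗ₜ 1) * (y ⊗ₜ 1) := by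
    rw [Algebra.TensorProduct.tmul_mul_tmul, mul_one]
  simp only [coeffEnd_apply, hxy]
  exact ⟨by rw [(hT _ _).1, equivFinsuppOfBasisRight_mul_tmul_one],
    by rw [(hT _ _).2, equivFinsuppOfBasisRight_tmul_one_mul]⟩

theorem finite_support_coeffEnd
    (hfg : ∃ s : Finset A, NonUnitalAlgebra.adjoin k (↑s : Set A) = ⊤)
    {T : Module.End k (A ⊗[k] R)} (hT : T ∈ centroid k (A ⊗[k] R)) :
    (Function.support (coeffEnd b T)).Finite := by
  classical
  obtain ⟨s, hs⟩ := hfg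
  let J := s.biUnion fun a => (equivFinsuppOfBasisRight b (T (a ⊗ₜ 1))).support
  refine J.finite_toSet.subset fun j hj => ?_
  by_contra hjJ
  exact hj <| eq_zero_of_mem_centroid_of_adjoin_eq_top (coeffEnd_mem_centroid b hT j) hs
    fun a ha => Finsupp.notMem_support_iff.1 fun h => hjJ (Finset.mem_biUnion.2 ⟨a, ha, h⟩)

theorem eq_of_mem_centroid_of_forall_tmul_one (hA : IsPerfectAlg k A)
    {T T' : Module.End k (A ⊗[k] R)} (hT : T ∈ centroid k (A ⊗[k] R))
    (hT' : T' ∈ centroid k (A ⊗[k] R)) (h : ∀ a : A, T (a ⊗ₜ 1) = T' (a ⊗ₜ 1)) : T = T' := by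
  refine TensorProduct.ext' fun a r => ?_
  let ρ : A →ₗ[k] A ⊗[k] R := (TensorProduct.mk k A R).flip r
  have hprod : Submodule.span k {z : A | ∃ x y : A, x * y = z} ≤
      LinearMap.eqLocus (T ∘ₗ ρ) (T' ∘ₗ ρ) := by
    rw [Submodule.span_le]
    rintro _ ⟨x, y, rfl⟩
    have hxy : (x * y) ⊗ₜ[k] r = (x ⊗ₜ 1) * (y ⊗ₜ r) := by
      rw [Algebra.TensorProduct.tmul_mul_tmul, one_mul]
    change T ((x * y) ⊗ₜ r) = T' ((x * y) ⊗ₜ r)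
    rw [hxy, (hT _ _).1, (hT' _ _).1, h]
  exact hprod (hA ▸ Submodule.mem_top : a ∈ _)

end AlgebraCoefficients

section Psi

variable {A S : Type} [NonUnitalNonAssocRing A] [Module k A] [SMulCommClass k A A]
  [IsScalarTower k A A] [CommRing S] [Algebra k S]

theorem psi_tmul (γ : centroid k A) (s : S) :
    psi k A S (γ ⊗ₜ s) = TensorProduct.map (γ : Module.End k A) (Algebra.lmul k S s) := by
  simp [psi, Algebra.coe_lmul_eq_mul]

theorem psi_mul (x y : centroid k A ⊗[k] S) : psi k A S (x * y) = psi k A S x * psi k A S y := by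
  induction x using TensorProduct.induction_on with
  | zero => simp
  | add x₁ x₂ h₁ h₂ => simp only [add_mul, map_add, h₁, h₂]
  | tmul γ s =>
    induction y using TensorProduct.induction_on with
    | zero => simp
    | add y₁ y₂ h₁ h₂ => simp only [mul_add, map_add, h₁, h₂]
    | tmul δ t =>
      rw [Algebra.TensorProduct.tmul_mul_tmul, psi_tmul, psi_tmul, psi_tmul, map_mul,
        MulMemClass.coe_mul, TensorProduct.map_mul]

theorem psi_one : psi k A S 1 = 1 := by
  rw [Algebra.TensorProduct.one_def, psi_tmul, map_one, OneMemClass.coe_one,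
    TensorProduct.map_one]

theorem psi_mem_centroid (x : centroid k A ⊗[k] S) : psi k A S x ∈ centroid k (A ⊗[k] S) := by
  induction x using TensorProduct.induction_on with
  | zero => rw [map_zero]; exact zero_mem _
  | add x y hx hy => rw [map_add]; exact add_mem hx hy
  | tmul γ s => rw [psi_tmul]; exact map_mem_centroid γ.2 (lmul_mem_centroid s)

theorem equivFinsuppOfBasisRight_psi_tmul_one {ι : Type} [DecidableEq ι] (b : Module.Basis ι k S)
    (x : centroid k A ⊗[k] S) (a : A) (j : ι) :
    equivFinsuppOfBasisRight b (psi k A S x (a ⊗ₜ 1)) j =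
      (equivFinsuppOfBasisRight b x j : Module.End k A) a := by
  induction x using TensorProduct.induction_on with
  | zero => simp
  | add x y hx hy => simp only [map_add, LinearMap.add_apply, Finsupp.add_apply, hx, hy,
      Subalgebra.coe_add]
  | tmul γ s => simp [psi_tmul]

theorem psi_injective : Function.Injective (psi k A S) := by
  classical
  let b := Module.Basis.ofVectorSpace k S
  refine (injective_iff_map_eq_zero _).2 fun x hx => (equivFinsuppOfBasisRight b).injective ?_
  ext j a
  simpa [hx] using (equivFinsuppOfBasisRight_psi_tmul_one b x a j).symm

theorem mem_range_psi_of_mem_centroid (hA : IsPerfectAlg k A)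
    (hfg : ∃ s : Finset A, NonUnitalAlgebra.adjoin k (↑s : Set A) = ⊤)
    {T : Module.End k (A ⊗[k] S)} (hT : T ∈ centroid k (A ⊗[k] S)) :
    T ∈ LinearMap.range (psi k A S) := by
  classical
  let b := Module.Basis.ofVectorSpace k S
  let c : _ →₀ centroid k A :=
    Finsupp.ofSupportFinite (fun j => ⟨coeffEnd b T j, coeffEnd_mem_centroid b hT j⟩)
      ((finite_support_coeffEnd b hfg hT).subset fun j hj h => hj (Subtype.ext h))
  refine ⟨(equivFinsuppOfBasisRight b).symm c, eq_of_mem_centroid_of_forall_tmul_one hA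
    (psi_mem_centroid _) hT fun a => (equivFinsuppOfBasisRight b).injective ?_⟩
  ext j
  rw [equivFinsuppOfBasisRight_psi_tmul_one, LinearEquiv.apply_symm_apply]
  rfl

end Psi

end

/-- Lemma 1.1(ii): if `A` is perfect and finitely generated as a `k`-algebra and `S` is a
commutative associative unital algebra, then `ψ : C(A) ⊗ S → C(A ⊗ S)` is an isomorphism of
associative algebras. -/
theorem psi_isomorphism_of_perfect_of_finitelyGenerated
    (k A S : Type) [Field k] [NonUnitalNonAssocRing A] [Module k A]
    [SMulCommClass k A A] [IsScalarTower k A A] [CommRing S] [Algebra k S]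
    (hA : IsPerfectAlg k A)
    (hfg : ∃ s : Finset A, NonUnitalAlgebra.adjoin k (↑s : Set A) = ⊤) :
    Function.Injective (psi k A S) ∧
      (∀ x y : ↥(centroid k A) ⊗[k] S, psi k A S (x * y) = psi k A S x * psi k A S y) ∧
      psi k A S 1 = 1 ∧
      (∀ T : Module.End k (A ⊗[k] S),
        T ∈ LinearMap.range (psi k A S) ↔ T ∈ centroid k (A ⊗[k] S)) := by
  refine ⟨psi_injective, psi_mul, psi_one, fun T => ⟨?_, mem_range_psi_of_mem_centroid hA hfg⟩⟩
  rintro ⟨x, rfl⟩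
  exact psi_mem_centroid x

end
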